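/- Let x, y ∈ ℝ⁶ with Q(x) = Q(y) = 0 and ⟨x,y⟩_Q = 1/2. Put P = X(x)·conj(X(y)) and P' = X(y)·conj(X(x)). Then P + P' = I₄, P² = P, P'² = P', Tr P = Tr P' = 2, and range P = range X(x); in particular P and P' are complementary idempotents of rank 2. -/
import Mathlib


open Matrix Complex

/-- The six antilinear-Clifford matrices Γ₁,…,Γ₆ (indexed 0,…,5). -/
noncomputable def Gam : Fin 6 → Matrix (Fin 4) (Fin 4) ℂ
  | 0 => !![0, 0, I, 0; 0, 0, 0, -I; I, 0, 0, 0; 0, -I, 0, 0]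
  | 1 => !![0, 0, 1, 0; 0, 0, 0, 1; 1, 0, 0, 0; 0, 1, 0, 0]
  | 2 => !![0, 0, 0, -I; 0, 0, -I, 0; 0, -I, 0, 0; -I, 0, 0, 0]
  | 3 => !![0, I, 0, 0; -I, 0, 0, 0; 0, 0, 0, I; 0, 0, -I, 0]
  | 4 => !![0, 0, 0, -1; 0, 0, 1, 0; 0, 1, 0, 0; -1, 0, 0, 0]
  | 5 => !![0, 1, 0, 0; -1, 0, 0, 0; 0, 0, 0, -1; 0, 0, 1, 0]

/-- X(x) = Σ x^α Γ_α. -/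
noncomputable def Xm (x : Fin 6 → ℝ) : Matrix (Fin 4) (Fin 4) ℂ :=
  ∑ α : Fin 6, (x α : ℂ) • Gam α

/-- The quadratic form of signature (4,2). -/
def Qform (x : Fin 6 → ℝ) : ℝ :=
  x 0 ^ 2 + x 1 ^ 2 + x 2 ^ 2 - x 3 ^ 2 + x 4 ^ 2 - x 5 ^ 2

/-- The bilinear form of signature (4,2). -/
def Qbil (x y : Fin 6 → ℝ) : ℝ :=
  x 0 * y 0 + x 1 * y 1 + x 2 * y 2 - x 3 * y 3 + x 4 * y 4 - x 5 * y 5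

/-- G = diag(1,1,-1,-1) as a function. -/
def Gv : Fin 4 → ℝ := ![1, 1, -1, -1]

/-- The pseudo-Hermitian form of signature (2,2) on ℂ⁴. -/
def herm (u v : Fin 4 → ℂ) : ℂ :=
  u 0 * starRingEnd ℂ (v 0) + u 1 * starRingEnd ℂ (v 1)
    - u 2 * starRingEnd ℂ (v 2) - u 3 * starRingEnd ℂ (v 3)

/-- The Levi-Civita symbol on four indices, ε^{0123} = 1. -/
noncomputable def eps (i j k l : Fin 4) : ℝ :=
  (((j : ℕ) : ℝ) - ((i : ℕ) : ℝ)) * (((k : ℕ) : ℝ) - ((i : ℕ) : ℝ)) *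
    (((l : ℕ) : ℝ) - ((i : ℕ) : ℝ)) * (((k : ℕ) : ℝ) - ((j : ℕ) : ℝ)) *
    (((l : ℕ) : ℝ) - ((j : ℕ) : ℝ)) * (((l : ℕ) : ℝ) - ((k : ℕ) : ℝ)) / 12

/-- The six antisymmetric matrices Σ₁,…,Σ₆ (indexed 0,…,5). -/
noncomputable def Sig : Fin 6 → Matrix (Fin 4) (Fin 4) ℂ
  | 0 => !![0, 0, -I, 0; 0, 0, 0, I; I, 0, 0, 0; 0, -I, 0, 0]
  | 1 => !![0, 0, -1, 0; 0, 0, 0, -1; 1, 0, 0, 0; 0, 1, 0, 0]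
  | 2 => !![0, 0, 0, I; 0, 0, I, 0; 0, -I, 0, 0; -I, 0, 0, 0]
  | 3 => !![0, I, 0, 0; -I, 0, 0, 0; 0, 0, 0, -I; 0, 0, I, 0]
  | 4 => !![0, 0, 0, 1; 0, 0, -1, 0; 0, 1, 0, 0; -1, 0, 0, 0]
  | 5 => !![0, 1, 0, 0; -1, 0, 0, 0; 0, 0, 0, 1; 0, 0, -1, 0]

/-- Σ(x) = Σ x^α Σ_α. -/
noncomputable def Sm (x : Fin 6 → ℝ) : Matrix (Fin 4) (Fin 4) ℂ :=
  ∑ α : Fin 6, (x α : ℂ) • Sig α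

/-- The antilinear Hodge star on antisymmetric 4×4 complex matrices. -/
noncomputable def hstar (A : Matrix (Fin 4) (Fin 4) ℂ) : Matrix (Fin 4) (Fin 4) ℂ :=
  Matrix.of fun i j =>
    (1 / 2 : ℂ) * ∑ k : Fin 4, ∑ l : Fin 4,
      ((eps i j k l : ℝ) : ℂ) * ((Gv k : ℝ) : ℂ) * ((Gv l : ℝ) : ℂ) * starRingEnd ℂ (A k l)


section Aux

private lemma Xm_eq (x : Fin 6 → ℝ) : Xm x =
    !![0, (x 3)*I + (x 5), (x 0)*I + (x 1), -(x 2)*I - (x 4);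
       -(x 3)*I - (x 5), 0, -(x 2)*I + (x 4), -(x 0)*I + (x 1);
       (x 0)*I + (x 1), -(x 2)*I + (x 4), 0, (x 3)*I - (x 5);
       -(x 2)*I - (x 4), -(x 0)*I + (x 1), -(x 3)*I + (x 5), 0] := by
  ext i j
  fin_cases i <;> fin_cases j <;>
    simp [Xm, Gam, Fin.sum_univ_six, Matrix.sum_apply, Matrix.vecHead, Matrix.vecTail] <;>
    ring

private lemma XmC_eq (x : Fin 6 → ℝ) : (Xm x).map (starRingEnd ℂ) =
    !![0, -(x 3)*I + (x 5), -(x 0)*I + (x 1), (x 2)*I - (x 4);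
       (x 3)*I - (x 5), 0, (x 2)*I + (x 4), (x 0)*I + (x 1);
       -(x 0)*I + (x 1), (x 2)*I + (x 4), 0, -(x 3)*I - (x 5);
       (x 2)*I - (x 4), (x 0)*I + (x 1), (x 3)*I + (x 5), 0] := by
  rw [Xm_eq]
  ext i j
  fin_cases i <;> fin_cases j <;> simp [Matrix.map_apply]

set_option maxHeartbeats 3200000 in
private lemma clifford (x y : Fin 6 → ℝ) :
    Xm x * (Xm y).map (starRingEnd ℂ) + Xm y * (Xm x).map (starRingEnd ℂ)
      = ((2 * Qbil x y : ℝ) : ℂ) • 1 := by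
  rw [XmC_eq x, XmC_eq y, Xm_eq x, Xm_eq y]
  ext i j
  fin_cases i <;> fin_cases j <;>
    simp [Matrix.mul_apply, Fin.sum_univ_four, Qbil, Matrix.one_apply,
      Matrix.vecHead, Matrix.vecTail] <;>
    ring_nf <;> simp [Complex.I_sq] <;> ring_nf

private lemma map_map_conj (M : Matrix (Fin 4) (Fin 4) ℂ) :
    (M.map (starRingEnd ℂ)).map (starRingEnd ℂ) = M := by
  ext i j; simp [Matrix.map_apply]

private lemma smul_one_map_conj (r : ℝ) :
    (((r : ℂ) • (1 : Matrix (Fin 4) (Fin 4) ℂ)).map (starRingEnd ℂ))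
      = (r : ℂ) • 1 := by
  ext i j
  simp [Matrix.map_apply, Matrix.smul_apply, Matrix.one_apply, apply_ite (starRingEnd ℂ)]

private lemma Qbil_comm (x y : Fin 6 → ℝ) : Qbil y x = Qbil x y := by
  simp only [Qbil]; ring

private lemma cliffordC (x y : Fin 6 → ℝ) :
    (Xm x).map (starRingEnd ℂ) * Xm y + (Xm y).map (starRingEnd ℂ) * Xm x
      = ((2 * Qbil x y : ℝ) : ℂ) • 1 := by
  have h := congrArg (fun M => M.map (starRingEnd ℂ)) (clifford y x)
  simp only [Matrix.map_add _ (fun a b => map_add (starRingEnd ℂ) a b),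
    Matrix.map_mul, map_map_conj, smul_one_map_conj, Qbil_comm x y] at h
  rw [add_comm]; exact h

set_option maxHeartbeats 1600000 in
private lemma trace_XmC (x y : Fin 6 → ℝ) :
    (Xm x * (Xm y).map (starRingEnd ℂ)).trace = ((4 * Qbil x y : ℝ) : ℂ) := by
  rw [XmC_eq y, Xm_eq x]
  simp [Matrix.trace, Matrix.diag, Matrix.mul_apply, Fin.sum_univ_four, Qbil,
    Matrix.vecHead, Matrix.vecTail]
  ring_nf
  simp [Complex.I_sq]
  ring_nf

end Aux

/-- For null x, y with ⟨x,y⟩_Q = 1/2, P = X(x)·conj(X(y)) and P' = X(y)·conj(X(x)) are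
complementary idempotents of rank 2, and range P = range X(x). -/
theorem complementary_idempotents (x y : Fin 6 → ℝ)
    (hx : Qform x = 0) (hy : Qform y = 0) (hxy : Qbil x y = 1 / 2) :
    Xm x * (Xm y).map (starRingEnd ℂ) + Xm y * (Xm x).map (starRingEnd ℂ) = 1 ∧
    (Xm x * (Xm y).map (starRingEnd ℂ)) * (Xm x * (Xm y).map (starRingEnd ℂ)) =
      Xm x * (Xm y).map (starRingEnd ℂ) ∧
    (Xm y * (Xm x).map (starRingEnd ℂ)) * (Xm y * (Xm x).map (starRingEnd ℂ)) =
      Xm y * (Xm x).map (starRingEnd ℂ) ∧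
    (Xm x * (Xm y).map (starRingEnd ℂ)).trace = 2 ∧
    (Xm y * (Xm x).map (starRingEnd ℂ)).trace = 2 ∧
    LinearMap.range (Xm x * (Xm y).map (starRingEnd ℂ)).mulVecLin =
      LinearMap.range (Xm x).mulVecLin := by
  set A := Xm x with hA
  set B := Xm y with hB
  set A' := (Xm x).map (starRingEnd ℂ) with hA'
  set B' := (Xm y).map (starRingEnd ℂ) with hB'
  have h1 : A * B' + B * A' = 1 := by
    have := clifford x y
    rw [hxy] at this
    simpa using this
  have h2 : A' * B + B' * A = 1 := by
    have := cliffordC x y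
    rw [hxy] at this
    simpa using this
  have hQx : Qbil x x = 0 := by
    have : Qbil x x = Qform x := by simp only [Qbil, Qform]; ring
    rw [this, hx]
  have hQy : Qbil y y = 0 := by
    have : Qbil y y = Qform y := by simp only [Qbil, Qform]; ring
    rw [this, hy]
  have hAA : A * A' = 0 := by
    have := clifford x x
    rw [hQx] at this
    simp only [mul_zero, Complex.ofReal_zero, zero_smul] at this
    have h2 : (2 : ℂ) • (Xm x * (Xm x).map (starRingEnd ℂ)) = 0 := by
      rw [two_smul]; exact this
    simpa using (smul_eq_zero.mp h2).resolve_left (by norm_num)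
  have hBB : B * B' = 0 := by
    have := clifford y y
    rw [hQy] at this
    simp only [mul_zero, Complex.ofReal_zero, zero_smul] at this
    have h2 : (2 : ℂ) • (Xm y * (Xm y).map (starRingEnd ℂ)) = 0 := by
      rw [two_smul]; exact this
    simpa using (smul_eq_zero.mp h2).resolve_left (by norm_num)
  have hB'A : B' * A = 1 - A' * B := by
    rw [← h2]; abel
  have hA'B : A' * B = 1 - B' * A := by
    rw [← h2]; abel
  have hPP : (A * B') * (A * B') = A * B' := by
    calc (A * B') * (A * B') = A * (B' * A) * B' := by noncomm_ring
    _ = A * (1 - A' * B) * B' := by rw [hB'A]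
    _ = A * B' - (A * A') * (B * B') := by noncomm_ring
    _ = A * B' := by rw [hAA, hBB]; noncomm_ring
  have hP'P' : (B * A') * (B * A') = B * A' := by
    calc (B * A') * (B * A') = B * (A' * B) * A' := by noncomm_ring
    _ = B * (1 - B' * A) * A' := by rw [hA'B]
    _ = B * A' - (B * B') * (A * A') := by noncomm_ring
    _ = B * A' := by rw [hAA, hBB]; noncomm_ring
  have htr1 : (A * B').trace = 2 := by
    rw [hA, hB', trace_XmC x y, hxy]; norm_num
  have htr2 : (B * A').trace = 2 := by
    rw [hB, hA', trace_XmC y x, Qbil_comm x y, hxy]; norm_num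
  have hPA : (A * B') * A = A := by
    calc (A * B') * A = A * (B' * A) := by noncomm_ring
    _ = A * (1 - A' * B) := by rw [hB'A]
    _ = A - (A * A') * B := by noncomm_ring
    _ = A := by rw [hAA]; noncomm_ring
  have hrange : LinearMap.range (A * B').mulVecLin = LinearMap.range A.mulVecLin := by
    apply le_antisymm
    · rw [Matrix.mulVecLin_mul]
      exact LinearMap.range_comp_le_range _ _
    · conv_lhs => rw [← hPA]
      rw [Matrix.mulVecLin_mul]
      exact LinearMap.range_comp_le_range _ _
  exact ⟨h1, hPP, hP'P', htr1, htr2, hrange⟩
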